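/- Let $w$ be a horizontal vector in $\mathbb{H}_n$ with $y_n(w) = 1$, let $P_w = V_0 \cap w^{\overline{\Omega}}$, $C_w = V_0 \cap w^\Omega$ (horizontal part), and let $\nu \in A \cap V_0$ be a horizontal unit vector orthogonal to $C_w$. Set $R_w = \{s\nu + p + tZ : p \in B_{C_w}(\mathbf{0},1), |s| \le 1, |t| \le 1\}$ and $Q_w(g,r) = \Pi_w(g\,\delta_r(R_w))$. Then for any $g \in \mathbb{H}_n$, $r > 0$, and $u \in V_0$, the intersection $Q_w(g,r) \cap uP_w$ is either empty or a quasiball of radius comparable to $r$ in the coset $uP_w$; in fact, for $s \in \mathbb{R}$, $\Pi_w(g\,\delta_r(R_w \cap \nu^{s} P_w))$ is a left-translate of $\delta_r(R_w \cap \nu^{s} P_w)$. -/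

import Mathlib

open scoped BigOperators
noncomputable section

/-- The Heisenberg group `ℍ_n`, as `ℝ^n × ℝ^n × ℝ`. -/
@[ext]
structure Heis (n : ℕ) where
  x : Fin n → ℝ
  y : Fin n → ℝ
  z : ℝ

namespace Heis

variable {n : ℕ}

/-- The standard symplectic form on `ℝ^{2n}`. -/
def Om (v w : (Fin n → ℝ) × (Fin n → ℝ)) : ℝ :=
  ∑ i, (v.1 i * w.2 i - w.1 i * v.2 i)

/-- The horizontal projection `π : ℍ_n → ℝ^{2n}`. -/
def pr (h : Heis n) : (Fin n → ℝ) × (Fin n → ℝ) := (h.x, h.y)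

lemma Om_add_left (x1 x2 y1 y2 : Fin n → ℝ) (w : (Fin n → ℝ) × (Fin n → ℝ)) :
    Om (x1 + x2, y1 + y2) w = Om (x1, y1) w + Om (x2, y2) w := by
  simp only [Om, Pi.add_apply]
  rw [← Finset.sum_add_distrib]
  exact Finset.sum_congr rfl (fun i _ => by ring)

lemma Om_add_right (v : (Fin n → ℝ) × (Fin n → ℝ)) (x1 x2 y1 y2 : Fin n → ℝ) :
    Om v (x1 + x2, y1 + y2) = Om v (x1, y1) + Om v (x2, y2) := by
  simp only [Om, Pi.add_apply]
  rw [← Finset.sum_add_distrib]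
  exact Finset.sum_congr rfl (fun i _ => by ring)

lemma Om_neg_self (x y : Fin n → ℝ) : Om (-x, -y) (x, y) = 0 := by
  simp only [Om, Pi.neg_apply]
  exact Finset.sum_eq_zero (fun i _ => by ring)

def mul' (g h : Heis n) : Heis n :=
  ⟨g.x + h.x, g.y + h.y, g.z + h.z + Om (pr g) (pr h) / 2⟩

instance : Group (Heis n) where
  mul := mul'
  one := ⟨0, 0, 0⟩
  inv g := ⟨-g.x, -g.y, -g.z⟩
  mul_assoc a b c := by
    show mul' (mul' a b) c = mul' a (mul' b c)
    simp only [mul', pr, Om_add_left, Om_add_right]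
    refine Heis.ext ?_ ?_ ?_
    · exact add_assoc _ _ _
    · exact add_assoc _ _ _
    · ring
  one_mul a := by
    show mul' ⟨0, 0, 0⟩ a = a
    simp only [mul', pr, Om]
    refine Heis.ext ?_ ?_ ?_ <;> simp
  mul_one a := by
    show mul' a ⟨0, 0, 0⟩ = a
    simp only [mul', pr, Om]
    refine Heis.ext ?_ ?_ ?_ <;> simp
  inv_mul_cancel a := by
    show mul' ⟨-a.x, -a.y, -a.z⟩ a = ⟨0, 0, 0⟩
    simp only [mul', pr]
    refine Heis.ext ?_ ?_ ?_
    · simp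
    · simp
    · simp [Om_neg_self]

lemma mul_def (g h : Heis n) :
    g * h = ⟨g.x + h.x, g.y + h.y, g.z + h.z + Om (pr g) (pr h) / 2⟩ := rfl

lemma one_def : (1 : Heis n) = ⟨0, 0, 0⟩ := rfl

lemma inv_def (g : Heis n) : g⁻¹ = ⟨-g.x, -g.y, -g.z⟩ := rfl

/-- The anisotropic dilations `δ_t`. -/
def dil (t : ℝ) (h : Heis n) : Heis n := ⟨t • h.x, t • h.y, t ^ 2 * h.z⟩

/-- The coordinate function `y_n` (the last `y`-coordinate). -/
def yn (h : Heis n) : ℝ := if hn : n = 0 then 0 else h.y ⟨n - 1, by omega⟩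

/-- A point of `ℍ_n` is a horizontal vector if its `z`-coordinate vanishes. -/
def IsHoriz (h : Heis n) : Prop := h.z = 0

/-- The vertical plane `V_0 = {y_n = 0}`. -/
def V0 (n : ℕ) : Set (Heis n) := {h | yn h = 0}

/-- `w^t = δ_t(w)`, for `w` a horizontal vector. -/
def wpow (w : Heis n) (t : ℝ) : Heis n := dil t w

/-- The projection to `V_0` along cosets of `⟨w⟩`: `Π_w(h) = h ⬝ w^{-y_n(h)}`. -/
def Piw (w : Heis n) (h : Heis n) : Heis n := h * wpow w (-(yn h))

/-- `Ω̄(g,h) = Ω(π(g), π(h))`. -/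
def Obar (g h : Heis n) : ℝ := Om (pr g) (pr h)

/-- The subgroup `P_w = V_0 ∩ w^{Ω̄}`. -/
def Pw (w : Heis n) : Set (Heis n) := {h | yn h = 0 ∧ Obar h w = 0}

/-- The horizontal subspace `C_w = A ∩ V_0 ∩ w^Ω`. -/
def Cw (w : Heis n) : Set (Heis n) := {h | h.z = 0 ∧ yn h = 0 ∧ Obar h w = 0}

/-- The Euclidean inner product of the horizontal coordinates. -/
def edot (g h : Heis n) : ℝ := ∑ i, g.x i * h.x i + ∑ i, g.y i * h.y i

/-- The `w`-intrinsic graph of a function `f : V_0 → ℝ`. -/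
def graphOf (f : Heis n → ℝ) (w : Heis n) : Set (Heis n) :=
  (fun v => v * wpow w (f v)) '' V0 n

/-- The vector `Y_n`. -/
def Yvec (n : ℕ) : Heis n := ⟨0, fun i => if (i : ℕ) = n - 1 then 1 else 0, 0⟩

section Metric

variable [MetricSpace (Heis n)]

/-- The open double cone `Cone_λ`. -/
def Cone (lam : ℝ) : Set (Heis n) := {p | lam * dist (1 : Heis n) p < |yn p|}

/-- `Γ` is an intrinsic `λ`-Lipschitz graph: `(x ⬝ Cone_λ) ∩ Γ = ∅` for all `x ∈ Γ`. -/
def IsIntrinsicLipGraph (lam : ℝ) (Γ : Set (Heis n)) : Prop :=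
  ∀ x ∈ Γ, ∀ c ∈ Cone (n := n) lam, x * c ∉ Γ

end Metric

end Heis

namespace Heis

/-- The box `R_w` determined by `w` and a unit horizontal vector `ν ∈ V₀` orthogonal
to `C_w`: `R_w = {sν + p + tZ : p ∈ B_{C_w}(𝟎,1), |s| ≤ 1, |t| ≤ 1}`. -/
def Rw {n : ℕ} (w ν : Heis n) : Set (Heis n) :=
  {h | ∃ (s t : ℝ) (p : Heis n), p ∈ Cw w ∧ edot p p ≤ 1 ∧ |s| ≤ 1 ∧ |t| ≤ 1 ∧
    h = ⟨s • ν.x + p.x, s • ν.y + p.y, t⟩}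

/-- The distorted box `Q_w(g, r) = Π_w(g δ_r(R_w))`. -/
def Qw {n : ℕ} (w ν : Heis n) (g : Heis n) (r : ℝ) : Set (Heis n) :=
  Piw w '' ((g * ·) '' (dil r '' Rw w ν))

end Heis

/-!
For `b ∈ ν^s P_w` the commutator `[b, w^α]` is the central element `Z^{α s Ω̄(ν, w)}`, which does
not depend on `b`, so `Π_w` acts on `g δ_r(R_w ∩ ν^s P_w)` as a single left translation. Since
`Ω̄(·, w)` is additive and vanishes at `w`, the point `Π_w(g δ_r b)` lies in `u P_w` exactly when
`b ∈ ν^{s₀} P_w` for one value `s₀`. Hence `Q_w(g, r) ∩ u P_w` is a left translate of `δ_r K`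
with `K = ν^{-s₀}(R_w ∩ ν^{s₀} P_w)`, and `K` lies between two balls of `P_w` about `1` whose radii
do not depend on `|s₀| ≤ 1`. The radii come from comparing the metric with the gauge
`|x|₁ + |y|₁ + √|z|`: from above by splitting a point into coordinate directions and using the
triangle inequality, from below by compactness of the unit gauge sphere.
-/

namespace Heis

variable {n : ℕ}

/-- `Z^c` in the notation of the paper. -/
def vert (c : ℝ) : Heis n := ⟨0, 0, c⟩

lemma Om_smul_left (a : ℝ) (x y : Fin n → ℝ) (v : (Fin n → ℝ) × (Fin n → ℝ)) :
    Om (a • x, a • y) v = a * Om (x, y) v := by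
  simp only [Om, Pi.smul_apply, smul_eq_mul, Finset.mul_sum]
  exact Finset.sum_congr rfl fun i _ => by ring

lemma Om_swap (u v : (Fin n → ℝ) × (Fin n → ℝ)) : Om u v = -Om v u := by
  simp only [Om, ← Finset.sum_neg_distrib]
  exact Finset.sum_congr rfl fun i _ => by ring

lemma Om_smul_right (a : ℝ) (v : (Fin n → ℝ) × (Fin n → ℝ)) (x y : Fin n → ℝ) :
    Om v (a • x, a • y) = a * Om v (x, y) := by
  rw [Om_swap, Om_smul_left, Om_swap (x, y)]; ring

lemma Om_zero_right (v : (Fin n → ℝ) × (Fin n → ℝ)) : Om v (0, 0) = 0 := by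
  simp [Om]

lemma Obar_mul_left (a b c : Heis n) : Obar (a * b) c = Obar a c + Obar b c :=
  Om_add_left a.x b.x a.y b.y (pr c)

lemma Obar_dil_left (t : ℝ) (a c : Heis n) : Obar (dil t a) c = t * Obar a c :=
  Om_smul_left t a.x a.y (pr c)

lemma Obar_inv_left (a c : Heis n) : Obar a⁻¹ c = -Obar a c := by
  simpa [Obar, pr, inv_def] using Om_smul_left (-1) a.x a.y (pr c)

lemma Obar_self (a : Heis n) : Obar a a = 0 := by
  have := Om_swap (pr a) (pr a)
  rw [Obar]; linarith

lemma Obar_one_right (a : Heis n) : Obar a 1 = 0 := by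
  simp [Obar, Om, pr, one_def]

lemma Obar_one_left (a : Heis n) : Obar 1 a = 0 := by
  simp [Obar, Om, pr, one_def]

lemma Obar_vert_left (c : ℝ) (a : Heis n) : Obar (vert c) a = 0 := by
  simp [Obar, Om, pr, vert]

lemma yn_mul (a b : Heis n) : yn (a * b) = yn a + yn b := by
  unfold yn; split <;> simp [mul_def]

lemma yn_inv (a : Heis n) : yn a⁻¹ = -yn a := by
  unfold yn; split <;> simp [inv_def]

lemma yn_dil (t : ℝ) (a : Heis n) : yn (dil t a) = t * yn a := by
  unfold yn; split <;> simp [dil]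

lemma yn_vert (c : ℝ) : yn (vert c : Heis n) = 0 := by
  unfold yn; split <;> simp [vert]

lemma yn_one : yn (1 : Heis n) = 0 := by
  unfold yn; split <;> simp [one_def]

lemma dil_mul (t : ℝ) (a b : Heis n) : dil t (a * b) = dil t a * dil t b := by
  ext
  · simp [dil, mul_def]
  · simp [dil, mul_def]
  · simp only [dil, mul_def, pr, Om_smul_left, Om_smul_right]; ring

lemma dil_dil (a b : ℝ) (h : Heis n) : dil a (dil b h) = dil (a * b) h := by
  ext <;> simp [dil, smul_smul]; ring

lemma one_dil (h : Heis n) : dil 1 h = h := by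
  ext <;> simp [dil]

lemma dil_one (t : ℝ) : dil t (1 : Heis n) = 1 := by
  ext <;> simp [dil, one_def]

lemma vert_zero : (vert 0 : Heis n) = 1 := rfl

lemma mul_wpow {w : Heis n} (hw : IsHoriz w) (a : Heis n) (α : ℝ) :
    a * wpow w α = wpow w α * vert (α * Obar a w) * a := by
  ext
  · simp [mul_def, wpow, dil, vert, add_comm]
  · simp [mul_def, wpow, dil, vert, add_comm]
  · simp only [IsHoriz] at hw
    simp only [mul_def, wpow, dil, vert, pr, Obar, hw, Om_smul_right, Om_zero_right]
    rw [add_zero, add_zero, Om_smul_left, Om_swap (w.x, w.y)]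
    ring

section Slices

variable {w ν : Heis n}

lemma mem_coset_Pw_iff {u q : Heis n} :
    q ∈ (u * ·) '' Pw w ↔ yn q = yn u ∧ Obar q w = Obar u w := by
  constructor
  · rintro ⟨d, ⟨hdy, hdO⟩, rfl⟩
    rw [yn_mul, Obar_mul_left, hdy, hdO, add_zero, add_zero]
    exact ⟨rfl, rfl⟩
  · rintro ⟨hy, hO⟩
    refine ⟨u⁻¹ * q, ⟨?_, ?_⟩, mul_inv_cancel_left u q⟩
    · rw [yn_mul, yn_inv, hy, neg_add_cancel]
    · rw [Obar_mul_left, Obar_inv_left, hO, neg_add_cancel]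

lemma mul_mem_coset_Pw {u x d : Heis n} (hx : x ∈ (u * ·) '' Pw w) (hd : d ∈ Pw w) :
    x * d ∈ (u * ·) '' Pw w := by
  rw [mem_coset_Pw_iff] at hx ⊢
  rw [yn_mul, Obar_mul_left, hd.1, hd.2, add_zero, add_zero]
  exact hx

lemma inv_mul_mem_Pw {u x q : Heis n} (hx : x ∈ (u * ·) '' Pw w) (hq : q ∈ (u * ·) '' Pw w) :
    x⁻¹ * q ∈ Pw w := by
  rw [mem_coset_Pw_iff] at hx hq
  refine ⟨?_, ?_⟩
  · rw [yn_mul, yn_inv, hx.1, hq.1, neg_add_cancel]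
  · rw [Obar_mul_left, Obar_inv_left, hx.2, hq.2, neg_add_cancel]

lemma dil_mem_Pw {d : Heis n} (hd : d ∈ Pw w) (t : ℝ) : dil t d ∈ Pw w := by
  refine ⟨?_, ?_⟩
  · rw [yn_dil, hd.1, mul_zero]
  · rw [Obar_dil_left, hd.2, mul_zero]

lemma yn_Piw (hwy : yn w = 1) (h : Heis n) : yn (Piw w h) = 0 := by
  rw [Piw, yn_mul, wpow, yn_dil, hwy]; ring

lemma Obar_Piw (h : Heis n) : Obar (Piw w h) w = Obar h w := by
  rw [Piw, Obar_mul_left, wpow, Obar_dil_left, Obar_self, mul_zero, add_zero]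

def sliceTranslate (w ν g : Heis n) (r s : ℝ) : Heis n :=
  g * wpow w (-yn g) * vert (-yn g * (r * (s * Obar ν w)))

lemma Piw_mul_dil_of_mem_coset (hw : IsHoriz w) (hν0 : yn ν = 0) {s : ℝ} {b : Heis n}
    (hb : b ∈ (dil s ν * ·) '' Pw w) (g : Heis n) (r : ℝ) :
    Piw w (g * dil r b) = sliceTranslate w ν g r s * dil r b := by
  obtain ⟨hby, hbO⟩ := mem_coset_Pw_iff.1 hb
  rw [yn_dil, hν0, mul_zero] at hby
  rw [Obar_dil_left] at hbO
  have hy : yn (g * dil r b) = yn g := by rw [yn_mul, yn_dil, hby, mul_zero, add_zero]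
  rw [Piw, hy, mul_assoc, mul_wpow hw, Obar_dil_left, hbO, sliceTranslate]
  group

lemma Piw_image_Rw_inter_coset (hw : IsHoriz w) (hν0 : yn ν = 0) (g : Heis n) (r s : ℝ) :
    Piw w '' ((g * ·) '' (dil r '' (Rw w ν ∩ (dil s ν * ·) '' Pw w))) =
      (sliceTranslate w ν g r s * ·) '' (dil r '' (Rw w ν ∩ (dil s ν * ·) '' Pw w)) := by
  simp only [Set.image_image]
  exact Set.image_congr fun b hb => Piw_mul_dil_of_mem_coset hw hν0 hb.2 g r

/-- `Kw w ν s` is the slice `R_w ∩ ν^s P_w` translated back to `P_w` by `ν^{-s}`. -/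
def Kw (w ν : Heis n) (s : ℝ) : Set (Heis n) :=
  {k | ∃ p ∈ Cw w, edot p p ≤ 1 ∧ ∃ t : ℝ, |t| ≤ 1 ∧ k = p * vert (t - s * Obar ν p / 2)}

lemma Kw_subset_Pw (s : ℝ) : Kw w ν s ⊆ Pw w := by
  rintro _ ⟨p, ⟨-, hpy, hpO⟩, -, t, -, rfl⟩
  refine ⟨?_, ?_⟩
  · rw [yn_mul, hpy, yn_vert, add_zero]
  · rw [Obar_mul_left, hpO, Obar_vert_left, add_zero]

lemma one_mem_Kw (s : ℝ) : (1 : Heis n) ∈ Kw w ν s :=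
  ⟨1, ⟨rfl, yn_one, Obar_one_left w⟩, by simp [edot, one_def], 0, by simp,
    by rw [Obar_one_right, mul_zero, zero_div, sub_zero, vert_zero, mul_one]⟩

lemma mem_Rw_iff (hν : IsHoriz ν) {b : Heis n} :
    b ∈ Rw w ν ↔ ∃ s, |s| ≤ 1 ∧ b ∈ (dil s ν * ·) '' Kw w ν s := by
  have hdecomp : ∀ (s t : ℝ) (p : Heis n), p.z = 0 →
      (⟨s • ν.x + p.x, s • ν.y + p.y, t⟩ : Heis n) =
        dil s ν * (p * vert (t - s * Obar ν p / 2)) := by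
    intro s t p hp
    simp only [IsHoriz] at hν
    ext
    · simp [mul_def, dil, vert]
    · simp [mul_def, dil, vert]
    · simp only [mul_def, dil, vert, pr, hν, hp, Obar, add_zero, Om_zero_right, Om_smul_left]
      ring
  constructor
  · rintro ⟨s, t, p, hp, hpp, hs, ht, rfl⟩
    exact ⟨s, hs, _, ⟨p, hp, hpp, t, ht, rfl⟩, (hdecomp s t p hp.1).symm⟩
  · rintro ⟨s, hs, _, ⟨p, hp, hpp, t, ht, rfl⟩, rfl⟩
    exact ⟨s, t, p, hp, hpp, hs, ht, (hdecomp s t p hp.1).symm⟩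

lemma dil_mul_mem_coset_iff (hκ : Obar ν w ≠ 0) {s s' : ℝ} {d : Heis n} (hd : d ∈ Pw w) :
    dil s' ν * d ∈ (dil s ν * ·) '' Pw w ↔ s' = s := by
  constructor
  · intro h
    have hO := (mem_coset_Pw_iff.1 h).2
    rw [Obar_mul_left, Obar_dil_left, Obar_dil_left, hd.2, add_zero] at hO
    exact mul_right_cancel₀ hκ hO
  · rintro rfl
    exact ⟨d, hd, rfl⟩

lemma Rw_inter_coset_eq (hν : IsHoriz ν) (hκ : Obar ν w ≠ 0) {s : ℝ} (hs : |s| ≤ 1) :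
    Rw w ν ∩ (dil s ν * ·) '' Pw w = (dil s ν * ·) '' Kw w ν s := by
  ext b
  rw [Set.mem_inter_iff, mem_Rw_iff hν]
  constructor
  · rintro ⟨⟨s', -, k, hk, rfl⟩, hb⟩
    obtain rfl := (dil_mul_mem_coset_iff hκ (Kw_subset_Pw s' hk)).1 hb
    exact ⟨k, hk, rfl⟩
  · rintro ⟨k, hk, rfl⟩
    exact ⟨⟨s, hs, k, hk, rfl⟩, k, Kw_subset_Pw s hk, rfl⟩

lemma Rw_inter_coset_eq_empty (hν : IsHoriz ν) (hκ : Obar ν w ≠ 0) {s : ℝ} (hs : 1 < |s|) :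
    Rw w ν ∩ (dil s ν * ·) '' Pw w = ∅ := by
  refine Set.eq_empty_of_forall_notMem ?_
  rintro b ⟨hbR, hb⟩
  obtain ⟨s', hs', k, hk, rfl⟩ := (mem_Rw_iff hν).1 hbR
  obtain rfl := (dil_mul_mem_coset_iff hκ (Kw_subset_Pw s' hk)).1 hb
  exact hs.not_ge hs'

lemma yn_of_mem_Rw (hν : IsHoriz ν) (hν0 : yn ν = 0) {b : Heis n} (hb : b ∈ Rw w ν) :
    yn b = 0 := by
  obtain ⟨s, -, k, hk, rfl⟩ := (mem_Rw_iff hν).1 hb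
  rw [yn_mul, yn_dil, hν0, (Kw_subset_Pw s hk).1, mul_zero, add_zero]

lemma Piw_mul_dil_mem_coset_iff (hwy : yn w = 1) (hν0 : yn ν = 0) {g u b : Heis n} {r s : ℝ}
    (hr : r ≠ 0) (hu : yn u = 0) (hs : Obar g w + r * (s * Obar ν w) = Obar u w)
    (hb : yn b = 0) :
    Piw w (g * dil r b) ∈ (u * ·) '' Pw w ↔ b ∈ (dil s ν * ·) '' Pw w := by
  rw [mem_coset_Pw_iff, mem_coset_Pw_iff, yn_Piw hwy, Obar_Piw, Obar_mul_left, Obar_dil_left,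
    yn_dil, Obar_dil_left, hν0, hu, hb, mul_zero, ← hs]
  simp only [true_and, add_right_inj]
  exact (mul_right_injective₀ hr).eq_iff

lemma Qw_inter_coset_eq (hν : IsHoriz ν) (hwy : yn w = 1) (hν0 : yn ν = 0) {g u : Heis n}
    {r s : ℝ} (hr : r ≠ 0) (hu : yn u = 0) (hs : Obar g w + r * (s * Obar ν w) = Obar u w) :
    Qw w ν g r ∩ (u * ·) '' Pw w =
      Piw w '' ((g * ·) '' (dil r '' (Rw w ν ∩ (dil s ν * ·) '' Pw w))) := by
  simp only [Qw, Set.image_image]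
  ext q
  constructor
  · rintro ⟨⟨b, hb, rfl⟩, hq⟩
    have hbs := (Piw_mul_dil_mem_coset_iff hwy hν0 hr hu hs (yn_of_mem_Rw hν hν0 hb)).1 hq
    exact ⟨b, ⟨hb, hbs⟩, rfl⟩
  · rintro ⟨b, ⟨hb, hbs⟩, rfl⟩
    exact ⟨⟨b, hb, rfl⟩,
      (Piw_mul_dil_mem_coset_iff hwy hν0 hr hu hs (yn_of_mem_Rw hν hν0 hb)).2 hbs⟩

end Slices

lemma image_mul_dil_image_mul (a b : Heis n) (r : ℝ) (S : Set (Heis n)) :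
    (a * ·) '' (dil r '' ((b * ·) '' S)) = (a * dil r b * ·) '' (dil r '' S) := by
  simp only [Set.image_image, dil_mul, mul_assoc]

def horizNorm (h : Heis n) : ℝ := ∑ i, |h.x i| + ∑ i, |h.y i|

def gauge (h : Heis n) : ℝ := horizNorm h + √|h.z|

lemma horizNorm_nonneg (h : Heis n) : 0 ≤ horizNorm h := by
  unfold horizNorm; positivity

lemma gauge_nonneg (h : Heis n) : 0 ≤ gauge h :=
  add_nonneg (horizNorm_nonneg h) (Real.sqrt_nonneg _)

lemma gauge_one : gauge (1 : Heis n) = 0 := by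
  simp [gauge, horizNorm, one_def]

lemma gauge_dil (t : ℝ) (h : Heis n) : gauge (dil t h) = |t| * gauge h := by
  have hz : √(|t ^ 2| * |h.z|) = |t| * √|h.z| := by
    rw [abs_pow, sq_abs, Real.sqrt_mul (sq_nonneg t), Real.sqrt_sq_eq_abs]
  simp only [gauge, horizNorm, dil, Pi.smul_apply, smul_eq_mul, abs_mul, hz, ← Finset.mul_sum]
  ring

lemma abs_sum_mul_le (x y : Fin n → ℝ) :
    |∑ i, x i * y i| ≤ (∑ i, |x i|) * ∑ i, |y i| := by
  calc |∑ i, x i * y i| ≤ ∑ i, |x i| * |y i| := by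
        simpa only [abs_mul] using Finset.abs_sum_le_sum_abs (fun i => x i * y i) _
    _ ≤ ∑ i, |x i| * ∑ j, |y j| := by
        gcongr with i
        exact Finset.single_le_sum (fun j _ => abs_nonneg (y j)) (Finset.mem_univ i)
    _ = _ := by rw [Finset.sum_mul]

lemma gauge_mul_vert {p : Heis n} (hp : p.z = 0) (c : ℝ) :
    gauge (p * vert c) = horizNorm p + √|c| := by
  simp [gauge, horizNorm, mul_def, vert, pr, Om, hp]

/-- The metric topology of `Heis n` is not assumed to be the coordinate topology; `ofCoords`
relates the two. -/
def ofCoords (v : (Fin n → ℝ) × (Fin n → ℝ) × ℝ) : Heis n := ⟨v.1, v.2.1, v.2.2⟩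

lemma continuous_gauge_mul_ofCoords (a : Heis n) :
    Continuous fun v => gauge (a * ofCoords v) := by
  simp only [gauge, horizNorm, mul_def, ofCoords, pr, Om, Pi.add_apply]
  fun_prop

lemma isCompact_gauge_eq_one : IsCompact {v | gauge (ofCoords v : Heis n) = 1} := by
  have hbox : IsCompact ((Set.univ.pi fun _ : Fin n => Set.Icc (-1 : ℝ) 1) ×ˢ
      (Set.univ.pi fun _ : Fin n => Set.Icc (-1 : ℝ) 1) ×ˢ Set.Icc (-1 : ℝ) 1) :=
    (isCompact_univ_pi fun _ => isCompact_Icc).prod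
      ((isCompact_univ_pi fun _ => isCompact_Icc).prod isCompact_Icc)
  refine hbox.of_isClosed_subset
    (isClosed_eq (by simpa using continuous_gauge_mul_ofCoords (1 : Heis n)) continuous_const) ?_
  intro v (hv : gauge (ofCoords v) = 1)
  simp only [gauge, horizNorm, ofCoords] at hv
  have hx := Finset.sum_nonneg fun i (_ : i ∈ Finset.univ) => abs_nonneg (v.1 i)
  have hy := Finset.sum_nonneg fun i (_ : i ∈ Finset.univ) => abs_nonneg (v.2.1 i)
  have hz := Real.sqrt_nonneg |v.2.2|
  refine ⟨fun i _ => abs_le.1 ?_, fun i _ => abs_le.1 ?_, abs_le.1 ?_⟩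
  · have := Finset.single_le_sum (fun j _ => abs_nonneg (v.1 j)) (Finset.mem_univ i)
    linarith
  · have := Finset.single_le_sum (fun j _ => abs_nonneg (v.2.1 j)) (Finset.mem_univ i)
    linarith
  · exact Real.sqrt_le_one.1 (by linarith)

structure IsHomogeneousMetric (n : ℕ) [MetricSpace (Heis n)] : Prop where
  dist_mul_left : ∀ g p q : Heis n, dist (g * p) (g * q) = dist p q
  dist_dil : ∀ (t : ℝ) (p q : Heis n), dist (dil t p) (dil t q) = |t| * dist p q

namespace IsHomogeneousMetric

variable [MetricSpace (Heis n)]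

lemma dist_mul_right_self (hd : IsHomogeneousMetric n) (x d : Heis n) :
    dist x (x * d) = dist 1 d := by
  simpa using hd.dist_mul_left x 1 d

lemma dist_one_mul_le (hd : IsHomogeneousMetric n) (a b : Heis n) :
    dist 1 (a * b) ≤ dist 1 a + dist 1 b :=
  (dist_triangle 1 a (a * b)).trans_eq (by rw [hd.dist_mul_right_self])

lemma dist_one_dil (hd : IsHomogeneousMetric n) (t : ℝ) (h : Heis n) :
    dist 1 (dil t h) = |t| * dist 1 h := by
  simpa [dil_one] using hd.dist_dil t 1 h

lemma exists_dist_one_le_of_additive (hd : IsHomogeneousMetric n) (f : (Fin n → ℝ) → Heis n)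
    (hadd : ∀ a b, f (a + b) = f a * f b) (hsmul : ∀ (t : ℝ) a, f (t • a) = dil t (f a)) :
    ∃ M, 0 ≤ M ∧ ∀ x, dist 1 (f x) ≤ M * ∑ i, |x i| := by
  have hf0 : f 0 = 1 := by simpa using hadd 0 0
  refine ⟨∑ j, dist 1 (f (Pi.single j 1)), by positivity, fun x => ?_⟩
  have hsingle : ∀ i, dist 1 (f (Pi.single i (x i))) = |x i| * dist 1 (f (Pi.single i 1)) := by
    intro i
    rw [← hd.dist_one_dil, ← hsmul, ← Pi.single_smul, smul_eq_mul, mul_one]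
  calc dist 1 (f x) = dist 1 (f (∑ i, Pi.single i (x i))) := by rw [Finset.univ_sum_single]
    _ ≤ ∑ i, dist 1 (f (Pi.single i (x i))) :=
        Finset.le_sum_of_subadditive (fun a => dist 1 (f a)) (by simp [hf0])
          (fun a b => by simpa only [hadd] using hd.dist_one_mul_le _ _) _ _
    _ ≤ ∑ i, |x i| * ∑ j, dist 1 (f (Pi.single j 1)) := by
        simp only [hsingle]
        gcongr with i
        exact Finset.single_le_sum (f := fun j => dist 1 (f (Pi.single j 1)))
          (fun j _ => dist_nonneg) (Finset.mem_univ i)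
    _ = _ := by rw [← Finset.sum_mul, mul_comm]

lemma exists_dist_one_vert_le (hd : IsHomogeneousMetric n) :
    ∃ M, 0 ≤ M ∧ ∀ c, dist 1 (vert c : Heis n) ≤ M * √|c| := by
  refine ⟨dist 1 (vert 1 : Heis n) + dist 1 (vert (-1) : Heis n), by positivity, fun c => ?_⟩
  obtain ⟨e, he, hce⟩ : ∃ e : ℝ, (e = 1 ∨ e = -1) ∧ (vert c : Heis n) = dil √|c| (vert e) := by
    rcases le_or_gt 0 c with hc | hc
    · exact ⟨1, Or.inl rfl, by ext <;> simp [vert, dil, abs_of_nonneg hc, Real.sq_sqrt hc]⟩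
    · exact ⟨-1, Or.inr rfl, by
        ext <;> simp [vert, dil, abs_of_neg hc, Real.sq_sqrt (neg_nonneg.2 hc.le)]⟩
  rw [hce, hd.dist_one_dil, abs_of_nonneg (Real.sqrt_nonneg _), mul_comm]
  gcongr
  rcases he with rfl | rfl
  · exact le_add_of_nonneg_right dist_nonneg
  · exact le_add_of_nonneg_left dist_nonneg

lemma exists_dist_one_le_gauge (hd : IsHomogeneousMetric n) :
    ∃ C, 0 ≤ C ∧ ∀ h : Heis n, dist 1 h ≤ C * gauge h := by
  obtain ⟨M₁, hM₁, hX⟩ := hd.exists_dist_one_le_of_additive (fun x => ⟨x, 0, 0⟩)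
    (fun a b => by ext <;> simp [mul_def, pr, Om]) (fun t a => by ext <;> simp [dil])
  obtain ⟨M₂, hM₂, hY⟩ := hd.exists_dist_one_le_of_additive (fun y => ⟨0, y, 0⟩)
    (fun a b => by ext <;> simp [mul_def, pr, Om]) (fun t a => by ext <;> simp [dil])
  obtain ⟨M₃, hM₃, hZ⟩ := hd.exists_dist_one_vert_le
  refine ⟨M₁ + M₂ + M₃, by positivity, fun h => ?_⟩
  set S := ∑ i, h.x i * h.y i
  set a := ∑ i, |h.x i|
  set b := ∑ i, |h.y i|
  have hdecomp : h = (⟨h.x, 0, 0⟩ : Heis n) * ⟨0, h.y, 0⟩ * vert (-S / 2) * vert h.z := by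
    ext <;> simp [mul_def, vert, pr, Om, S]; ring
  have ha : 0 ≤ a := by positivity
  have hb : 0 ≤ b := by positivity
  have hS : √|-S / 2| ≤ a + b := by
    have hSab : |S| ≤ a * b := abs_sum_mul_le h.x h.y
    rw [Real.sqrt_le_left (by positivity), abs_div, abs_neg, abs_two]
    nlinarith
  have hz := Real.sqrt_nonneg |h.z|
  calc dist 1 h ≤ M₁ * a + M₂ * b + M₃ * √|-S / 2| + M₃ * √|h.z| := by
        conv_lhs => rw [hdecomp]
        refine (hd.dist_one_mul_le _ _).trans (add_le_add ?_ (hZ _))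
        refine (hd.dist_one_mul_le _ _).trans (add_le_add ?_ (hZ _))
        exact (hd.dist_one_mul_le _ _).trans (add_le_add (hX h.x) (hY h.y))
    _ ≤ (M₁ + M₂ + M₃) * gauge h := by
        simp only [gauge, horizNorm]
        nlinarith [mul_le_mul_of_nonneg_left hS hM₃]

lemma continuous_ofCoords (hd : IsHomogeneousMetric n) : Continuous (ofCoords : _ → Heis n) := by
  obtain ⟨C, -, hC⟩ := hd.exists_dist_one_le_gauge
  refine continuous_iff_continuousAt.2 fun a => tendsto_iff_dist_tendsto_zero.2 ?_
  have hlim : Filter.Tendsto (fun v => C * gauge ((ofCoords a)⁻¹ * ofCoords v))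
      (nhds a) (nhds 0) := by
    have := ((continuous_gauge_mul_ofCoords (ofCoords a)⁻¹).tendsto a).const_mul C
    rwa [inv_mul_cancel, gauge_one, mul_zero] at this
  refine squeeze_zero (fun _ => dist_nonneg) (fun v => ?_) hlim
  have e := hd.dist_mul_right_self (ofCoords a) ((ofCoords a)⁻¹ * ofCoords v)
  rw [mul_inv_cancel_left] at e
  rw [dist_comm, e]
  exact hC _

lemma exists_mul_gauge_le_dist_one (hd : IsHomogeneousMetric n) :
    ∃ c, 0 < c ∧ ∀ h : Heis n, c * gauge h ≤ dist 1 h := by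
  obtain ⟨v₀, hv₀, hmin⟩ := isCompact_gauge_eq_one.exists_isMinOn
    ⟨(0, 0, 1), by simp [gauge, horizNorm, ofCoords]⟩
    (continuous_const.dist hd.continuous_ofCoords).continuousOn
  refine ⟨dist 1 (ofCoords v₀), dist_pos.2 fun h1 => ?_, fun h => ?_⟩
  · simp [← h1, gauge_one] at hv₀
  rcases eq_or_ne (gauge h) 0 with hg | hg
  · rw [hg, mul_zero]; exact dist_nonneg
  have hpos : 0 < gauge h := (gauge_nonneg h).lt_of_ne' hg
  have hsphere : gauge (dil (gauge h)⁻¹ h) = 1 := by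
    rw [gauge_dil, abs_of_pos (inv_pos.2 hpos), inv_mul_cancel₀ hg]
  have hle : dist 1 (ofCoords v₀) ≤ dist 1 (dil (gauge h)⁻¹ h) :=
    hmin (a := ((dil (gauge h)⁻¹ h).x, (dil (gauge h)⁻¹ h).y, (dil (gauge h)⁻¹ h).z)) hsphere
  calc dist 1 (ofCoords v₀) * gauge h ≤ dist 1 (dil (gauge h)⁻¹ h) * gauge h := by gcongr
    _ = dist 1 h := by
        rw [hd.dist_one_dil, abs_of_pos (inv_pos.2 hpos), mul_comm, ← mul_assoc,
          mul_inv_cancel₀ hg, one_mul]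

end IsHomogeneousMetric

section Quasiballs

variable {w ν : Heis n}

lemma abs_coord_le_one_of_edot_self_le_one {p : Heis n} (hp : edot p p ≤ 1) (i : Fin n) :
    |p.x i| ≤ 1 ∧ |p.y i| ≤ 1 := by
  have hx := Finset.sum_nonneg fun j (_ : j ∈ Finset.univ) => mul_self_nonneg (p.x j)
  have hy := Finset.sum_nonneg fun j (_ : j ∈ Finset.univ) => mul_self_nonneg (p.y j)
  have hxi := Finset.single_le_sum (fun j _ => mul_self_nonneg (p.x j)) (Finset.mem_univ i)
  have hyi := Finset.single_le_sum (fun j _ => mul_self_nonneg (p.y j)) (Finset.mem_univ i)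
  simp only [edot] at hp
  exact ⟨abs_le_one_iff_mul_self_le_one.2 (by linarith),
    abs_le_one_iff_mul_self_le_one.2 (by linarith)⟩

lemma abs_Obar_le_horizNorm (hν : edot ν ν ≤ 1) (p : Heis n) : |Obar ν p| ≤ horizNorm p := by
  calc |Obar ν p| ≤ ∑ i, |ν.x i * p.y i - p.x i * ν.y i| := by
        simp only [Obar, Om, pr]; exact Finset.abs_sum_le_sum_abs _ _
    _ ≤ ∑ i, (|p.x i| + |p.y i|) := by
        gcongr with i
        obtain ⟨h1, h2⟩ := abs_coord_le_one_of_edot_self_le_one hν i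
        calc |ν.x i * p.y i - p.x i * ν.y i| ≤ |ν.x i| * |p.y i| + |p.x i| * |ν.y i| := by
              simpa only [abs_mul] using abs_sub (ν.x i * p.y i) (p.x i * ν.y i)
          _ ≤ 1 * |p.y i| + |p.x i| * 1 := by gcongr
          _ = |p.x i| + |p.y i| := by ring
    _ = horizNorm p := Finset.sum_add_distrib

lemma edot_self_le_horizNorm_sq (p : Heis n) : edot p p ≤ horizNorm p ^ 2 := by
  have hx := Finset.sum_sq_le_sq_sum_of_nonneg (s := Finset.univ) fun i _ => abs_nonneg (p.x i)
  have hy := Finset.sum_sq_le_sq_sum_of_nonneg (s := Finset.univ) fun i _ => abs_nonneg (p.y i)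
  have ha := Finset.sum_nonneg fun i (_ : i ∈ Finset.univ) => abs_nonneg (p.x i)
  have hb := Finset.sum_nonneg fun i (_ : i ∈ Finset.univ) => abs_nonneg (p.y i)
  simp only [sq_abs] at hx hy
  simp only [edot, horizNorm, ← sq]
  nlinarith

lemma horizNorm_le_of_edot_self_le_one {p : Heis n} (hp : edot p p ≤ 1) :
    horizNorm p ≤ 2 * n := by
  have hx : ∑ i, |p.x i| ≤ ∑ _i : Fin n, (1 : ℝ) :=
    Finset.sum_le_sum fun i _ => (abs_coord_le_one_of_edot_self_le_one hp i).1
  have hy : ∑ i, |p.y i| ≤ ∑ _i : Fin n, (1 : ℝ) :=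
    Finset.sum_le_sum fun i _ => (abs_coord_le_one_of_edot_self_le_one hp i).2
  simp only [Finset.sum_const, Finset.card_univ, Fintype.card_fin, nsmul_eq_mul, mul_one] at hx hy
  unfold horizNorm
  linarith

lemma gauge_le_of_mem_Kw (hν : edot ν ν ≤ 1) {s : ℝ} (hs : |s| ≤ 1) {k : Heis n}
    (hk : k ∈ Kw w ν s) : gauge k ≤ 3 * n + 1 := by
  obtain ⟨p, hp, hpp, t, ht, rfl⟩ := hk
  rw [gauge_mul_vert hp.1]
  have hN := horizNorm_le_of_edot_self_le_one hpp
  have hO := abs_Obar_le_horizNorm hν p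
  have hc : |t - s * Obar ν p / 2| ≤ n + 1 := by
    calc |t - s * Obar ν p / 2| ≤ |t| + |s| * |Obar ν p| / 2 := by
          simpa [abs_mul, abs_div] using abs_sub t (s * Obar ν p / 2)
      _ ≤ 1 + 1 * horizNorm p / 2 := by gcongr
      _ ≤ n + 1 := by linarith
  have hsqrt : √|t - s * Obar ν p / 2| ≤ n + 1 :=
    (Real.sqrt_le_left (by positivity)).2 (hc.trans (by nlinarith))
  linarith

lemma mem_Kw_of_gauge_le (hν : edot ν ν ≤ 1) {s : ℝ} (hs : |s| ≤ 1) {d : Heis n}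
    (hd : d ∈ Pw w) (hg : gauge d ≤ 1 / 2) : d ∈ Kw w ν s := by
  set p : Heis n := ⟨d.x, d.y, 0⟩
  have hN : horizNorm p ≤ 1 / 2 := by
    have := Real.sqrt_nonneg |d.z|
    simp only [gauge] at hg
    exact (le_add_of_nonneg_right this).trans hg
  have hz : |d.z| ≤ 1 / 4 := by
    have := horizNorm_nonneg d
    have h : √|d.z| ≤ 1 / 2 := by simp only [gauge] at hg; linarith
    rw [Real.sqrt_le_left (by norm_num)] at h
    linarith
  have hO := abs_Obar_le_horizNorm hν p
  refine ⟨p, ⟨rfl, hd.1, hd.2⟩, ?_, d.z + s * Obar ν p / 2, ?_, ?_⟩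
  · nlinarith [edot_self_le_horizNorm_sq p, horizNorm_nonneg p]
  · calc |d.z + s * Obar ν p / 2| ≤ |d.z| + |s| * |Obar ν p| / 2 := by
          simpa [abs_mul, abs_div] using abs_add_le d.z (s * Obar ν p / 2)
      _ ≤ 1 / 4 + 1 * (1 / 2) / 2 := by gcongr; exact hO.trans hN
      _ ≤ 1 := by norm_num
  · ext <;> simp [p, mul_def, vert, pr, Om]

lemma IsHomogeneousMetric.exists_Kw_quasiball [MetricSpace (Heis n)]
    (hd : IsHomogeneousMetric n) (hν : edot ν ν ≤ 1) :
    ∃ lam, 1 ≤ lam ∧ ∀ s, |s| ≤ 1 →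
      {d ∈ Pw w | dist 1 d ≤ 1 / lam} ⊆ Kw w ν s ∧ ∀ k ∈ Kw w ν s, dist 1 k ≤ lam := by
  obtain ⟨C, hC, hCg⟩ := hd.exists_dist_one_le_gauge
  obtain ⟨c, hc, hcg⟩ := hd.exists_mul_gauge_le_dist_one
  set lam := max (max 1 (2 / c)) (C * (3 * n + 1))
  refine ⟨lam, le_max_of_le_left (le_max_left _ _),
    fun s hs => ⟨fun d ⟨hdP, hdist⟩ => mem_Kw_of_gauge_le hν hs hdP ?_, fun k hk => ?_⟩⟩
  · have h1 : 1 / lam ≤ c / 2 :=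
      calc 1 / lam ≤ 1 / (2 / c) :=
            one_div_le_one_div_of_le (by positivity) (le_max_of_le_left (le_max_right _ _))
        _ = c / 2 := one_div_div 2 c
    nlinarith [hcg d]
  · calc dist 1 k ≤ C * gauge k := hCg k
      _ ≤ C * (3 * n + 1) := by gcongr; exact gauge_le_of_mem_Kw hν hs hk
      _ ≤ _ := le_max_right _ _

lemma IsHomogeneousMetric.coset_quasiball [MetricSpace (Heis n)] (hd : IsHomogeneousMetric n)
    {S : Set (Heis n)} {lam r : ℝ} (hr : 0 < r) (hSP : S ⊆ Pw w)
    (hin : {d ∈ Pw w | dist 1 d ≤ 1 / lam} ⊆ S) (hout : ∀ k ∈ S, dist 1 k ≤ lam)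
    {u x : Heis n} (hx : x ∈ (u * ·) '' Pw w) :
    {q ∈ (u * ·) '' Pw w | dist x q ≤ r / lam} ⊆ (x * ·) '' (dil r '' S) ∧
      (x * ·) '' (dil r '' S) ⊆ {q ∈ (u * ·) '' Pw w | dist x q ≤ lam * r} := by
  constructor
  · rintro q ⟨hq, hdist⟩
    have hqd : x * dil r (dil r⁻¹ (x⁻¹ * q)) = q := by
      rw [dil_dil, mul_inv_cancel₀ hr.ne', one_dil, mul_inv_cancel_left]
    refine ⟨_, ⟨dil r⁻¹ (x⁻¹ * q), hin ⟨dil_mem_Pw (inv_mul_mem_Pw hx hq) _, ?_⟩, rfl⟩, hqd⟩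
    rw [hd.dist_one_dil, ← hd.dist_mul_right_self x, mul_inv_cancel_left,
      abs_of_pos (inv_pos.2 hr)]
    calc r⁻¹ * dist x q ≤ r⁻¹ * (r / lam) := by gcongr
      _ = 1 / lam := by field_simp
  · rintro _ ⟨_, ⟨k, hk, rfl⟩, rfl⟩
    refine ⟨mul_mem_coset_Pw hx (dil_mem_Pw (hSP hk) r), ?_⟩
    rw [hd.dist_mul_right_self, hd.dist_one_dil, abs_of_pos hr, mul_comm]
    exact mul_le_mul_of_nonneg_right (hout k hk) hr.le

end Quasiballs

end Heis

open Heis in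
theorem Qw_slices_are_quasiballs_general {n : ℕ} [MetricSpace (Heis n)]
    (hinv : ∀ g p q : Heis n, dist (g * p) (g * q) = dist p q)
    (hdil : ∀ (t : ℝ) (p q : Heis n), dist (dil t p) (dil t q) = |t| * dist p q)
    (w : Heis n) (hw : IsHoriz w) (hwy : yn w = 1)
    (ν : Heis n) (hν : IsHoriz ν) (hν0 : ν ∈ V0 n) (hν1 : edot ν ν = 1)
    (hνC : ∀ c ∈ Cw w, edot ν c = 0) :
    (∃ lamq : ℝ, 1 ≤ lamq ∧
      ∀ (g : Heis n) (r : ℝ) (u : Heis n), 0 < r → u ∈ V0 n →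
        Qw w ν g r ∩ (u * ·) '' Pw w = ∅ ∨
        ∃ x ∈ (u * ·) '' Pw w,
          {p ∈ (u * ·) '' Pw w | dist x p ≤ r / lamq} ⊆ Qw w ν g r ∩ (u * ·) '' Pw w ∧
          Qw w ν g r ∩ (u * ·) '' Pw w ⊆ {p ∈ (u * ·) '' Pw w | dist x p ≤ lamq * r}) ∧
    (∀ (g : Heis n) (r s : ℝ), 0 < r →
      ∃ h : Heis n,
        Piw w '' ((g * ·) '' (dil r '' (Rw w ν ∩ (dil s ν * ·) '' Pw w))) =
          (h * ·) '' (dil r '' (Rw w ν ∩ (dil s ν * ·) '' Pw w))) := by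
  have hd : IsHomogeneousMetric n := ⟨hinv, hdil⟩
  have hκ : Obar ν w ≠ 0 := fun h0 => by simpa [hν1] using hνC ν ⟨hν, hν0, h0⟩
  refine ⟨?_, fun g r s _ => ⟨_, Piw_image_Rw_inter_coset hw hν0 g r s⟩⟩
  obtain ⟨lam, hlam, hK⟩ := hd.exists_Kw_quasiball (w := w) hν1.le
  refine ⟨lam, hlam, fun g r u hr hu => ?_⟩
  set s := (Obar u w - Obar g w) / (r * Obar ν w)
  have hs : Obar g w + r * (s * Obar ν w) = Obar u w := by
    simp only [s]; field_simp; ring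
  have hQ := Qw_inter_coset_eq hν hwy hν0 hr.ne' hu hs
  rw [Piw_image_Rw_inter_coset hw hν0] at hQ
  rcases le_or_gt |s| 1 with hs1 | hs1
  · set x := sliceTranslate w ν g r s * dil r (dil s ν)
    rw [Rw_inter_coset_eq hν hκ hs1, image_mul_dil_image_mul] at hQ
    have hx : x ∈ (u * ·) '' Pw w := by
      have hx' : x ∈ (x * ·) '' (dil r '' Kw w ν s) := ⟨1, ⟨1, one_mem_Kw s, dil_one r⟩, mul_one x⟩
      exact (hQ ▸ hx').2
    rw [hQ]
    exact Or.inr ⟨x, hx, hd.coset_quasiball hr (Kw_subset_Pw s) (hK s hs1).1 (hK s hs1).2 hx⟩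
  · rw [hQ, Rw_inter_coset_eq_empty hν hκ hs1]
    simp

open Heis in
/-- (For any homogeneous left-invariant metric on `ℍ_n`, such as the
Carnot–Carathéodory metric.)  For any `g ∈ ℍ_n`, `r > 0` and `u ∈ V₀`, the slice
`Q_w(g,r) ∩ u P_w` is either empty or a quasiball of radius comparable to `r` in the
coset `u P_w`; in fact `Π_w(g δ_r(R_w ∩ ν^s P_w))` is a left-translate of
`δ_r(R_w ∩ ν^s P_w)`. -/
theorem Qw_slices_are_quasiballs {n : ℕ} (hn : 0 < n) [MetricSpace (Heis n)]
    (hinv : ∀ g p q : Heis n, dist (g * p) (g * q) = dist p q)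
    (hdil : ∀ (t : ℝ) (p q : Heis n), dist (dil t p) (dil t q) = |t| * dist p q)
    (w : Heis n) (hw : IsHoriz w) (hwy : yn w = 1)
    (ν : Heis n) (hν : IsHoriz ν) (hν0 : ν ∈ V0 n) (hν1 : edot ν ν = 1)
    (hνC : ∀ c ∈ Cw w, edot ν c = 0) :
    (∃ lamq : ℝ, 1 ≤ lamq ∧
      ∀ (g : Heis n) (r : ℝ) (u : Heis n), 0 < r → u ∈ V0 n →
        Qw w ν g r ∩ (u * ·) '' Pw w = ∅ ∨
        ∃ x ∈ (u * ·) '' Pw w,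
          {p ∈ (u * ·) '' Pw w | dist x p ≤ r / lamq} ⊆ Qw w ν g r ∩ (u * ·) '' Pw w ∧
          Qw w ν g r ∩ (u * ·) '' Pw w ⊆ {p ∈ (u * ·) '' Pw w | dist x p ≤ lamq * r}) ∧
    (∀ (g : Heis n) (r s : ℝ), 0 < r →
      ∃ h : Heis n,
        Piw w '' ((g * ·) '' (dil r '' (Rw w ν ∩ (dil s ν * ·) '' Pw w))) =
          (h * ·) '' (dil r '' (Rw w ν ∩ (dil s ν * ·) '' Pw w))) :=
  Qw_slices_are_quasiballs_general hinv hdil w hw hwy ν hν hν0 hν1 hνC
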